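/- Greedy maximality of the BBGLL query: fix a trajectory T with n vertices, Δ ≥ 0 and a centre P = T[a, b]. Scanning columns from n down to 1, whenever the current vertex (b, j₂) can reach row a in the free-space graph, add the subtrajectory T[j₁, j₂] to 𝒫 where j₁ is the maximum column such that there is a directed path from (b, j₂) to (a, j₁), and continue the scan at column j₁ − 1. Then the resulting set 𝒫 has maximum cardinality among all sets of pairwise index-disjoint subtrajectories of T, each at discrete Fréchet distance at most Δ from P. -/

import Mathlib

/-!
An optimal walk for `dF(T[a,b], T[x,y]) ≤ Δ` is a monotone path in the free-space graph from
`(b, y)` down to `(a, x)`. Two such paths starting in row `b` cross whenever their landing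
columns in row `a` are interleaved, so if the scan at column `c` lands at `g`, the greatest
reachable column, then every admissible `T[x, y]` with `y ≤ c` has `x ≤ g`. Consequently, of
pairwise disjoint admissible subtrajectories at most one reaches past `g - 1` (all of those
contain `g`), and the rest are counted by the scan continued at `g - 1`.
-/

/-- One step of a discrete walk: each coordinate stays or decreases by one. -/
def Step (p q : ℕ × ℕ) : Prop :=
  (q.1 = p.1 ∨ q.1 + 1 = p.1) ∧ (q.2 = p.2 ∨ q.2 + 1 = p.2)

/-- A discrete walk from `(x, y)` down to `(1, 1)`. -/
def IsWalk (F : List (ℕ × ℕ)) (x y : ℕ) : Prop :=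
  F.head? = some (x, y) ∧ F.getLast? = some (1, 1) ∧ List.Chain' Step F

/-- The cost of a discrete walk: maximum pointwise distance along the walk. -/
noncomputable def walkCost (P Q : ℕ → ℝ × ℝ) (F : List (ℕ × ℕ)) : ℝ :=
  (F.map fun p => dist (P p.1) (Q p.2)).foldr max 0

/-- The discrete Fréchet distance between the sequences `P 1, …, P x` and `Q 1, …, Q y`. -/
noncomputable def dF (P : ℕ → ℝ × ℝ) (x : ℕ) (Q : ℕ → ℝ × ℝ) (y : ℕ) : ℝ :=
  sInf {c | ∃ F, IsWalk F x y ∧ walkCost P Q F = c}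

/-- The subtrajectory of `T` starting at index `a`, reindexed from `1`. -/
def subtraj (T : ℕ → ℝ × ℝ) (a : ℕ) : ℕ → ℝ × ℝ := fun i => T (a + i - 1)

/-- A directed path in the free-space graph `M_Δ(T, T)` from `s` to `t`:
all visited cells are zeroes (distance at most `Δ`) and consecutive cells
differ by a step of the grid graph. -/
def IsFSPath (T : ℕ → ℝ × ℝ) (Δ : ℝ) (F : List (ℕ × ℕ)) (s t : ℕ × ℕ) : Prop :=
  F.head? = some s ∧ F.getLast? = some t ∧ List.Chain' Step F ∧
  ∀ p ∈ F, dist (T p.1) (T p.2) ≤ Δ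

open Classical in
/-- The greedy Query scan of BBGLL: scan columns from high to low; whenever the current
vertex (b, j₂) can reach row a in the free-space graph, add T[j₁, j₂] where j₁ is the
maximum landing column in row a, and continue the scan at column j₁ - 1. -/
noncomputable def greedyQuery (T : ℕ → ℝ × ℝ) (Δ : ℝ) (a b : ℕ) : ℕ → Finset (ℕ × ℕ)
  | 0 => ∅
  | (j + 1) =>
    if _h : ∃ j₁, ∃ F, IsFSPath T Δ F (b, j + 1) (a, j₁) then
      insert (Nat.findGreatest (fun j₁ => ∃ F, IsFSPath T Δ F (b, j + 1) (a, j₁)) (j + 1), j + 1)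
        (greedyQuery T Δ a b
          (Nat.findGreatest (fun j₁ => ∃ F, IsFSPath T Δ F (b, j + 1) (a, j₁)) (j + 1) - 1))
    else greedyQuery T Δ a b j
  decreasing_by
  · have := Nat.findGreatest_le (P := fun j₁ => ∃ F, IsFSPath T Δ F (b, j + 1) (a, j₁)) (j + 1)
    omega
  · omega

theorem Step.le {p q : ℕ × ℕ} (h : Step p q) : q ≤ p :=
  Prod.mk_le_mk.2 ⟨by rcases h.1 with h | h <;> omega, by rcases h.2 with h | h <;> omega⟩

theorem le_and_le_of_mem_of_isChain_step {F : List (ℕ × ℕ)} {s t p : ℕ × ℕ}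
    (hF : F.IsChain Step) (hs : F.head? = some s) (ht : F.getLast? = some t) (hp : p ∈ F) :
    t ≤ p ∧ p ≤ s := by
  constructor
  · refine hF.backwards_induction (t ≤ ·) _ (fun _ _ hxy h => h.trans hxy.le) ?_ p hp
    intro hne
    rw [List.getLast?_eq_some_getLast hne] at ht
    exact (Option.some_injective _ ht).ge
  · refine hF.induction (· ≤ s) _ (fun _ _ hxy h => hxy.le.trans h) ?_ p hp
    intro hne
    rw [List.head?_eq_some_head hne] at hs
    exact (Option.some_injective _ hs).le

theorem IsWalk.cons {F : List (ℕ × ℕ)} {x y x' y' : ℕ} (hF : IsWalk F x' y')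
    (hs : Step (x, y) (x', y')) : IsWalk ((x, y) :: F) x y := by
  obtain ⟨hh, hl, hc⟩ := hF
  obtain ⟨l, rfl⟩ := List.head?_eq_some_iff.1 hh
  exact ⟨rfl, by rwa [List.getLast?_cons_cons], hc.cons_cons hs⟩

theorem exists_isWalk (x y : ℕ) : ∃ F, IsWalk F (x + 1) (y + 1) := by
  induction x with
  | zero =>
    induction y with
    | zero => exact ⟨[(1, 1)], rfl, rfl, .singleton _⟩
    | succ y ih =>
      obtain ⟨F, hF⟩ := ih
      exact ⟨_, hF.cons ⟨.inl rfl, .inr rfl⟩⟩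
  | succ x ih =>
    obtain ⟨F, hF⟩ := ih
    exact ⟨_, hF.cons ⟨.inr rfl, .inl rfl⟩⟩

theorem List.foldr_max_mem_cons {α : Type*} [LinearOrder α] (l : List α) (a : α) :
    l.foldr max a ∈ a :: l := by
  induction l with
  | nil => simp
  | cons b l ih =>
    simp only [List.foldr_cons, List.mem_cons] at ih ⊢
    rcases max_choice b (l.foldr max a) with h | h <;> rw [h] <;> tauto

theorem dist_le_walkCost (P Q : ℕ → ℝ × ℝ) {F : List (ℕ × ℕ)} {p : ℕ × ℕ} (hp : p ∈ F) :
    dist (P p.1) (Q p.2) ≤ walkCost P Q F :=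
  List.le_max_of_le' 0 (List.mem_map_of_mem hp) le_rfl

theorem exists_isWalk_walkCost_eq_dF (P Q : ℕ → ℝ × ℝ) {x y : ℕ} (hx : 1 ≤ x) (hy : 1 ≤ y) :
    ∃ F, IsWalk F x y ∧ walkCost P Q F = dF P x Q y := by
  set S := {c | ∃ F, IsWalk F x y ∧ walkCost P Q F = c}
  have hne : S.Nonempty := by
    obtain ⟨x, rfl⟩ := Nat.exists_eq_add_of_le' hx
    obtain ⟨y, rfl⟩ := Nat.exists_eq_add_of_le' hy
    obtain ⟨F, hF⟩ := exists_isWalk x y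
    exact ⟨_, F, hF, rfl⟩
  -- a walk cost is `0` or one of the finitely many distances `dist (P i) (Q j)`, `i ≤ x`, `j ≤ y`
  have hfin : S.Finite := by
    refine (((Finset.Icc (1, 1) (x, y)).image fun p => dist (P p.1) (Q p.2)).finite_toSet.insert
      0).subset ?_
    rintro _ ⟨F, ⟨hs, ht, hc⟩, rfl⟩
    rcases List.mem_cons.1 (List.foldr_max_mem_cons (F.map fun p => dist (P p.1) (Q p.2)) 0)
      with h | h
    · exact .inl h
    · obtain ⟨p, hp, hpc⟩ := List.mem_map.1 h
      refine .inr (Finset.mem_image.2 ⟨p, Finset.mem_Icc.2 ?_, hpc⟩)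
      exact le_and_le_of_mem_of_isChain_step hc hs ht hp
  exact hne.csInf_mem hfin

def FSReach (T : ℕ → ℝ × ℝ) (Δ : ℝ) (s t : ℕ × ℕ) : Prop :=
  ∃ F, IsFSPath T Δ F s t

theorem fsReach_of_dF_le {T : ℕ → ℝ × ℝ} {Δ : ℝ} {a b x y : ℕ} (hab : a ≤ b) (hxy : x ≤ y)
    (hd : dF (subtraj T a) (b - a + 1) (subtraj T x) (y - x + 1) ≤ Δ) :
    FSReach T Δ (b, y) (a, x) := by
  obtain ⟨F, ⟨hs, ht, hc⟩, hcost⟩ := exists_isWalk_walkCost_eq_dF (subtraj T a) (subtraj T x)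
    (Nat.le_add_left 1 (b - a)) (Nat.le_add_left 1 (y - x))
  let shift : ℕ × ℕ → ℕ × ℕ := fun p => (a + p.1 - 1, x + p.2 - 1)
  refine ⟨F.map shift, ?_, ?_, ?_, ?_⟩
  · simp only [List.head?_map, hs, Option.map_some, shift, Option.some.injEq, Prod.mk.injEq]
    omega
  · simp only [List.getLast?_map, ht, Option.map_some, shift, Option.some.injEq, Prod.mk.injEq]
    omega
  · refine List.isChain_map_of_isChain shift (fun p q hpq => ?_) hc
    simp only [Step, shift] at hpq ⊢
    omega
  · intro _ hq
    obtain ⟨p, hp, rfl⟩ := List.mem_map.1 hq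
    exact (dist_le_walkCost (subtraj T a) (subtraj T x) hp).trans (hcost.trans_le hd)

namespace IsFSPath

variable {T : ℕ → ℝ × ℝ} {Δ : ℝ}

theorem le_and_le_of_mem {F : List (ℕ × ℕ)} {s t p : ℕ × ℕ} (h : IsFSPath T Δ F s t)
    (hp : p ∈ F) : t ≤ p ∧ p ≤ s :=
  le_and_le_of_mem_of_isChain_step h.2.2.1 h.1 h.2.1 hp

theorem exists_eq_cons {F : List (ℕ × ℕ)} {s t : ℕ × ℕ} (h : IsFSPath T Δ F s t) :
    ∃ l, F = s :: l :=
  List.head?_eq_some_iff.1 h.1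

theorem cons {l : List (ℕ × ℕ)} {u w t : ℕ × ℕ} (h : IsFSPath T Δ (w :: l) w t)
    (hs : Step u w) (hu : dist (T u.1) (T u.2) ≤ Δ) : IsFSPath T Δ (u :: w :: l) u t :=
  ⟨rfl, by rw [List.getLast?_cons_cons]; exact h.2.1, h.2.2.1.cons_cons hs,
    List.forall_mem_cons.2 ⟨hu, h.2.2.2⟩⟩

theorem tail {l : List (ℕ × ℕ)} {u w t : ℕ × ℕ} (h : IsFSPath T Δ (u :: w :: l) u t) :
    IsFSPath T Δ (w :: l) w t :=
  ⟨rfl, by rw [← List.getLast?_cons_cons]; exact h.2.1, h.2.2.1.tail,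
    fun p hp => h.2.2.2 p (List.mem_cons_of_mem _ hp)⟩

theorem step {l : List (ℕ × ℕ)} {u w t : ℕ × ℕ} (h : IsFSPath T Δ (u :: w :: l) u t) :
    Step u w :=
  (List.isChain_cons_cons.1 h.2.2.1).1

end IsFSPath

theorem FSReach.le {T : ℕ → ℝ × ℝ} {Δ : ℝ} {s t : ℕ × ℕ} (h : FSReach T Δ s t) : t ≤ s := by
  obtain ⟨F, hF⟩ := h
  obtain ⟨l, rfl⟩ := hF.exists_eq_cons
  exact (hF.le_and_le_of_mem List.mem_cons_self).1

/-- Walk both paths simultaneously, always advancing one that is not strictly below the other: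
as `u`'s path starts right of `v`'s and lands left of it, the two meet. -/
theorem fsReach_of_isFSPath_cross {T : ℕ → ℝ × ℝ} {Δ : ℝ} {A x x' : ℕ} (hx : x' ≤ x) :
    ∀ {u v : ℕ × ℕ} {l₁ l₂ : List (ℕ × ℕ)}, IsFSPath T Δ (u :: l₁) u (A, x') →
      IsFSPath T Δ (v :: l₂) v (A, x) → u.1 = v.1 → v.2 ≤ u.2 → FSReach T Δ u (A, x)
  | u, v, l₁, l₂, h₁, h₂, hrow, hcol => by
    by_cases huv : u = v
    · exact huv ▸ ⟨_, h₂⟩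
    have hlt : v.2 < u.2 := lt_of_le_of_ne hcol fun h => huv (Prod.ext hrow h.symm)
    have hv := (h₂.le_and_le_of_mem List.mem_cons_self).1
    match l₁, l₂, h₁, h₂ with
    | [], _, h₁, _ =>
      obtain rfl : u = (A, x') := by simpa using h₁.2.1
      exact absurd hv.2 (by simp only; omega)
    | w :: l₁, l₂, h₁, h₂ =>
      have hu : dist (T u.1) (T u.2) ≤ Δ := h₁.2.2.2 u List.mem_cons_self
      have hw := (h₁.tail.le_and_le_of_mem List.mem_cons_self).1
      rcases h₁.step with ⟨hr₁ | hr₁, hc₁⟩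
      · obtain ⟨G, hG⟩ := fsReach_of_isFSPath_cross hx h₁.tail h₂ (by omega) (by omega)
        obtain ⟨l, rfl⟩ := hG.exists_eq_cons
        exact ⟨_, hG.cons ⟨.inl hr₁, hc₁⟩ hu⟩
      · match l₂, h₂ with
        | [], h₂ =>
          obtain rfl : v = (A, x) := by simpa using h₂.2.1
          exact absurd hw.1 (by simp only; omega)
        | v' :: l₂, h₂ =>
          rcases h₂.step with ⟨hr₂ | hr₂, hc₂⟩
          · exact fsReach_of_isFSPath_cross hx h₁ h₂.tail (by omega) (by omega)
          · obtain ⟨G, hG⟩ := fsReach_of_isFSPath_cross hx h₁.tail h₂.tail (by omega) (by omega)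
            obtain ⟨l, rfl⟩ := hG.exists_eq_cons
            exact ⟨_, hG.cons ⟨.inr hr₁, hc₁⟩ hu⟩
termination_by _ _ l₁ l₂ => l₁.length + l₂.length

theorem FSReach.cross {T : ℕ → ℝ × ℝ} {Δ : ℝ} {A x x' : ℕ} {u v : ℕ × ℕ}
    (hu : FSReach T Δ u (A, x')) (hv : FSReach T Δ v (A, x)) (hrow : u.1 = v.1)
    (hcol : v.2 ≤ u.2) (hx : x' ≤ x) : FSReach T Δ u (A, x) := by
  obtain ⟨F₁, h₁⟩ := hu
  obtain ⟨F₂, h₂⟩ := hv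
  obtain ⟨l₁, rfl⟩ := h₁.exists_eq_cons
  obtain ⟨l₂, rfl⟩ := h₂.exists_eq_cons
  exact fsReach_of_isFSPath_cross hx h₁ h₂ hrow hcol

open Finset in
theorem Finset.card_filter_mem_Icc_le_one {α : Type*} [LinearOrder α] [LocallyFiniteOrder α]
    {s : Finset (α × α)}
    (hs : (s : Set (α × α)).Pairwise fun p q => Disjoint (Icc p.1 p.2) (Icc q.1 q.2)) (g : α) :
    #{p ∈ s | g ∈ Icc p.1 p.2} ≤ 1 := by
  refine card_le_one.2 fun p hp q hq => ?_
  rw [mem_filter] at hp hq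
  by_contra hpq
  exact disjoint_left.1 (hs hp.1 hq.1 hpq) hp.2 hq.2

section Greedy

variable (T : ℕ → ℝ × ℝ) (Δ : ℝ) (a b : ℕ)

open Classical Finset

theorem greedyQuery_succ_of_exists {j : ℕ} (h : ∃ j₁, FSReach T Δ (b, j + 1) (a, j₁)) :
    greedyQuery T Δ a b (j + 1) =
      insert (Nat.findGreatest (fun j₁ => FSReach T Δ (b, j + 1) (a, j₁)) (j + 1), j + 1)
        (greedyQuery T Δ a b
          (Nat.findGreatest (fun j₁ => FSReach T Δ (b, j + 1) (a, j₁)) (j + 1) - 1)) := by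
  rw [greedyQuery]
  exact dif_pos h

theorem greedyQuery_succ_of_not_exists {j : ℕ} (h : ¬∃ j₁, FSReach T Δ (b, j + 1) (a, j₁)) :
    greedyQuery T Δ a b (j + 1) = greedyQuery T Δ a b j := by
  rw [greedyQuery]
  exact dif_neg h

theorem snd_le_of_mem_greedyQuery {m : ℕ} {q : ℕ × ℕ} (hq : q ∈ greedyQuery T Δ a b m) :
    q.2 ≤ m := by
  induction m using Nat.strong_induction_on with
  | _ m ih =>
    match m, hq with
    | 0, hq => simp [greedyQuery] at hq
    | j + 1, hq =>
      by_cases h : ∃ j₁, FSReach T Δ (b, j + 1) (a, j₁)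
      · rw [greedyQuery_succ_of_exists T Δ a b h, Finset.mem_insert] at hq
        rcases hq with rfl | hq
        · exact le_rfl
        · have := Nat.findGreatest_le (P := fun j₁ => FSReach T Δ (b, j + 1) (a, j₁)) (j + 1)
          exact (ih _ (by omega) hq).trans (by omega)
      · rw [greedyQuery_succ_of_not_exists T Δ a b h] at hq
        exact Nat.le_succ_of_le (ih j (by omega) hq)

theorem le_findGreatest_of_fsReach {c j₁ i k : ℕ} (h₁ : FSReach T Δ (b, c) (a, j₁))
    (hk : FSReach T Δ (b, k) (a, i)) (hkc : k ≤ c) :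
    i ≤ Nat.findGreatest (fun j => FSReach T Δ (b, c) (a, j)) c := by
  have hg := Nat.findGreatest_spec (P := fun j => FSReach T Δ (b, c) (a, j)) h₁.le.2 h₁
  by_contra! hlt
  have hi : FSReach T Δ (b, c) (a, i) := hg.cross hk rfl hkc hlt.le
  exact (Nat.le_findGreatest (P := fun j => FSReach T Δ (b, c) (a, j)) (hk.le.2.trans hkc)
    hi).not_gt hlt

theorem card_le_card_greedyQuery (m : ℕ) (Ps : Finset (ℕ × ℕ))
    (hPs : ∀ p ∈ Ps, 1 ≤ p.1 ∧ p.2 ≤ m ∧ FSReach T Δ (b, p.2) (a, p.1))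
    (hdisj : (Ps : Set (ℕ × ℕ)).Pairwise fun p q => Disjoint (Icc p.1 p.2) (Icc q.1 q.2)) :
    #Ps ≤ #(greedyQuery T Δ a b m) := by
  induction m using Nat.strong_induction_on generalizing Ps with
  | _ m ih =>
  match m with
  | 0 =>
    suffices Ps = ∅ by simp [this]
    refine eq_empty_of_forall_notMem fun p hp => ?_
    obtain ⟨h1, h2, hr⟩ := hPs p hp
    have := hr.le.2
    omega
  | j + 1 =>
    by_cases h : ∃ j₁, FSReach T Δ (b, j + 1) (a, j₁)
    swap
    · rw [greedyQuery_succ_of_not_exists T Δ a b h]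
      refine ih j (by omega) Ps (fun p hp => ?_) hdisj
      obtain ⟨h1, h2, hr⟩ := hPs p hp
      refine ⟨h1, Nat.le_of_lt_succ (h2.lt_of_ne fun h2 => h ⟨p.1, h2 ▸ hr⟩), hr⟩
    obtain ⟨j₁, hj₁⟩ := h
    set g := Nat.findGreatest (fun j₁ => FSReach T Δ (b, j + 1) (a, j₁)) (j + 1)
    have hg : g ≤ j + 1 := Nat.findGreatest_le _
    have hnew : (g, j + 1) ∉ greedyQuery T Δ a b (g - 1) := fun hmem => by
      have := snd_le_of_mem_greedyQuery T Δ a b hmem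
      simp only at this
      omega
    have hhigh : #{p ∈ Ps | g ≤ p.2} ≤ 1 := by
      refine (card_le_card fun p hp => ?_).trans (card_filter_mem_Icc_le_one hdisj g)
      obtain ⟨hp, hgp⟩ := mem_filter.1 hp
      obtain ⟨-, h2, hr⟩ := hPs p hp
      exact mem_filter.2 ⟨hp, mem_Icc.2 ⟨le_findGreatest_of_fsReach T Δ a b hj₁ hr h2, hgp⟩⟩
    have hlow : #{p ∈ Ps | ¬g ≤ p.2} ≤ #(greedyQuery T Δ a b (g - 1)) := by
      refine ih (g - 1) (by omega) _ (fun p hp => ?_)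
        (hdisj.mono (coe_subset.2 (filter_subset _ _)))
      obtain ⟨hp, hgp⟩ := mem_filter.1 hp
      obtain ⟨h1, -, hr⟩ := hPs p hp
      exact ⟨h1, by omega, hr⟩
    rw [greedyQuery_succ_of_exists T Δ a b ⟨j₁, hj₁⟩, card_insert_of_notMem hnew,
      ← card_filter_add_card_filter_not (g ≤ ·.2)]
    omega

end Greedy

theorem greedyQuery_max_general (T : ℕ → ℝ × ℝ) (n : ℕ) (Δ : ℝ)
    (a b : ℕ) (hab : a ≤ b) :
    ∀ Ps : Finset (ℕ × ℕ),
      (∀ p ∈ Ps, 1 ≤ p.1 ∧ p.1 ≤ p.2 ∧ p.2 ≤ n ∧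
        dF (subtraj T a) (b - a + 1) (subtraj T p.1) (p.2 - p.1 + 1) ≤ Δ) →
      (∀ p ∈ Ps, ∀ q ∈ Ps, p ≠ q → Disjoint (Finset.Icc p.1 p.2) (Finset.Icc q.1 q.2)) →
      Ps.card ≤ (greedyQuery T Δ a b n).card := by
  intro Ps hPs hdisj
  refine card_le_card_greedyQuery T Δ a b n Ps (fun p hp => ?_) fun p hp q hq => hdisj p hp q hq
  obtain ⟨h1, h12, h2, hd⟩ := hPs p hp
  exact ⟨h1, h2, fsReach_of_dF_le hab h12 hd⟩

/-- greedy maximality of the BBGLL query: the greedy scan produces a set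
of maximum cardinality among all sets of pairwise index-disjoint subtrajectories of T,
each at discrete Fréchet distance at most Δ from the centre P = T[a,b]. -/
theorem greedyQuery_max (T : ℕ → ℝ × ℝ) (n : ℕ) (Δ : ℝ) (hΔ : 0 ≤ Δ)
    (a b : ℕ) (ha : 1 ≤ a) (hab : a ≤ b) (hb : b ≤ n) :
    ∀ Ps : Finset (ℕ × ℕ),
      (∀ p ∈ Ps, 1 ≤ p.1 ∧ p.1 ≤ p.2 ∧ p.2 ≤ n ∧
        dF (subtraj T a) (b - a + 1) (subtraj T p.1) (p.2 - p.1 + 1) ≤ Δ) →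
      (∀ p ∈ Ps, ∀ q ∈ Ps, p ≠ q → Disjoint (Finset.Icc p.1 p.2) (Finset.Icc q.1 q.2)) →
      Ps.card ≤ (greedyQuery T Δ a b n).card :=
  greedyQuery_max_general T n Δ a b hab
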